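/- arXiv:1712.04425 — 2 statements merged into one kernel-verified Lean document; each statement's English description precedes it below -/
import Mathlib

section
/- Let {a_n} be a sequence of positive real numbers such that the logarithmic differences Δ log a_n = log a_{n+1} - log a_n satisfy Δ log a_n → ∞ as n → ∞ and Δ log a_{n+1} = Δ log a_n + O(1/n) as n → ∞. Then {a_n} does not have Benford distributed waiting times. -/
open Filter

/-- `x` has leading digit `d` in base 10: `d·10^k ≤ x < (d+1)·10^k` for some integer `k`. -/
def HasLeadingDigit (x : ℝ) (d : ℕ) : Prop :=
  ∃ k : ℤ, (d : ℝ) * 10 ^ k ≤ x ∧ x < ((d : ℝ) + 1) * 10 ^ k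

/-- The Benford frequency `P(d) = log₁₀ (1 + 1/d)` of digit `d`. -/
noncomputable def benfordP (d : ℕ) : ℝ := Real.logb 10 (1 + 1 / (d : ℝ))

/-- A sequence is Benford distributed if for each digit `d ∈ {1,…,9}` the density of
indices `n` with `D(a_n) = d` equals `P(d)`. -/
def BenfordDistributed (a : ℕ → ℝ) : Prop :=
  ∀ d : ℕ, 1 ≤ d → d ≤ 9 →
    Tendsto
      (fun N : ℕ =>
        (Nat.card {n : ℕ | 1 ≤ n ∧ n ≤ N ∧ HasLeadingDigit (a n) d} : ℝ) / N)
      atTop (nhds (benfordP d))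

/-- A sequence is locally Benford distributed of order `k` if every `k`-tuple of digits
in `{1,…,9}` occurs among leading digits of `k` consecutive terms with density
`P(d₀)⋯P(d_{k-1})`. -/
def LocallyBenfordDistributed (a : ℕ → ℝ) (k : ℕ) : Prop :=
  ∀ d : Fin k → ℕ, (∀ i, 1 ≤ d i ∧ d i ≤ 9) →
    Tendsto
      (fun N : ℕ =>
        (Nat.card {n : ℕ | 1 ≤ n ∧ n ≤ N ∧
            ∀ i : Fin k, HasLeadingDigit (a (n + (i : ℕ))) (d i)} : ℝ) / N)
      atTop (nhds (∏ i : Fin k, benfordP (d i)))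

/-- `waitingTime a d i` is the waiting time `w_i(d) = n_{i+1}^{(d)} - n_i^{(d)}`, where
`n_1^{(d)} < n_2^{(d)} < ⋯` enumerates `{n ∈ ℕ, n ≥ 1 : D(a_n) = d}`
(the `j`-th element of this set, 1-indexed, being `Nat.nth · (j-1)`). -/
noncomputable def waitingTime (a : ℕ → ℝ) (d : ℕ) (i : ℕ) : ℕ :=
  Nat.nth (fun n => 1 ≤ n ∧ HasLeadingDigit (a n) d) i -
    Nat.nth (fun n => 1 ≤ n ∧ HasLeadingDigit (a n) d) (i - 1)

/-- A sequence has Benford distributed waiting times if for each digit `d ∈ {1,…,9}`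
the waiting times between occurrences of leading digit `d` take value `k` with density
`P(d)(1-P(d))^{k-1}`. -/
def BenfordWaitingTimes (a : ℕ → ℝ) : Prop :=
  ∀ d : ℕ, 1 ≤ d → d ≤ 9 → ∀ k : ℕ, 1 ≤ k →
    Tendsto
      (fun N : ℕ =>
        (Nat.card {i : ℕ | 1 ≤ i ∧ i ≤ N ∧ waitingTime a d i = k} : ℝ) / N)
      atTop (nhds (benfordP d * (1 - benfordP d) ^ (k - 1)))

/-- A sequence `u` of real numbers is uniformly distributed modulo 1. -/
def UniformlyDistributedMod1 (u : ℕ → ℝ) : Prop :=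
  ∀ t : ℝ, 0 ≤ t → t ≤ 1 →
    Tendsto
      (fun N : ℕ =>
        (Nat.card {n : ℕ | 1 ≤ n ∧ n ≤ N ∧ Int.fract (u n) ≤ t} : ℝ) / N)
      atTop (nhds t)

/-- `nthPrime n` is the `n`-th prime (1-indexed): `nthPrime 1 = 2`, `nthPrime 2 = 3`, … -/
noncomputable def nthPrime (n : ℕ) : ℕ := Nat.nth Nat.Prime (n - 1)

/-!
Write `g n = log a (n + 1) - log a n`. Two positive numbers with the same leading digit have ratio
in `(10 ^ j / 2, 2 · 10 ^ j)` for some integer `j`, so whenever `g n` lies in a window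
`(log 2 + m log 10, log 5 + m log 10)` the leading digits of `a n` and `a (n + 1)` differ.
Since `g → ∞` with increments `O(1 / n)`, it enters such a window at arbitrarily large indices `s`
and stays there for at least `s / R` steps. By pigeonhole some digit `d` occupies a ninth of that
stretch, and none of its occurrences there is followed by a waiting time `1`. So the indices `i`
with `w_i(d) = 1` leave gaps of length proportional to their position, which a set of positive
density `P(d)` cannot do.
-/

lemma exists_hasLeadingDigit {x : ℝ} (hx : 0 < x) : ∃ d ∈ Finset.Icc 1 9, HasLeadingDigit x d := by
  set k := Int.log 10 x
  have hk : (0 : ℝ) < 10 ^ k := by positivity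
  have hlow : 1 ≤ x / 10 ^ k := by
    rw [le_div_iff₀ hk, one_mul]; exact_mod_cast Int.zpow_log_le_self (by norm_num) hx
  have hhigh : x / 10 ^ k < 10 := by
    rw [div_lt_iff₀ hk, mul_comm, ← zpow_add_one₀ (by norm_num)]
    exact_mod_cast Int.lt_zpow_succ_log_self (by norm_num : 1 < 10) x
  refine ⟨⌊x / 10 ^ k⌋₊, Finset.mem_Icc.2 ⟨Nat.le_floor (by simpa using hlow), ?_⟩, k, ?_, ?_⟩
  · exact Nat.le_of_lt_succ ((Nat.floor_lt (by positivity)).2 (by simpa using hhigh))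
  · exact (le_div_iff₀ hk).1 (Nat.floor_le (by positivity))
  · exact (div_lt_iff₀ hk).1 (Nat.lt_floor_add_one _)

lemma HasLeadingDigit.pos {x : ℝ} {d : ℕ} (hd : 1 ≤ d) (h : HasLeadingDigit x d) : 0 < x := by
  obtain ⟨k, hk, -⟩ := h
  exact lt_of_lt_of_le (by positivity) hk

lemma HasLeadingDigit.log_sub_notMem_Ioo {x y : ℝ} {d : ℕ} (hd : 1 ≤ d)
    (hx : HasLeadingDigit x d) (hy : HasLeadingDigit y d) (m : ℤ) :
    Real.log y - Real.log x ∉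
      Set.Ioo (Real.log 2 + m * Real.log 10) (Real.log 5 + m * Real.log 10) := by
  have hx0 := hx.pos hd
  have hy0 := hy.pos hd
  obtain ⟨k, hxk, hxk'⟩ := hx
  obtain ⟨l, hyl, hyl'⟩ := hy
  have hlog (c : ℝ) (hc : 0 < c) : Real.log c + m * Real.log 10 + Real.log x =
      Real.log (c * 10 ^ m * x) := by
    rw [Real.log_mul (by positivity) hx0.ne', Real.log_mul hc.ne' (by positivity),
      Real.log_zpow]
  rintro ⟨hlo, hhi⟩
  have hlo' : 2 * 10 ^ m * x < y := by
    rw [← Real.log_lt_log_iff (by positivity) hy0, ← hlog 2 two_pos]; linarith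
  have hhi' : y < 5 * 10 ^ m * x := by
    rw [← Real.log_lt_log_iff hy0 (by positivity), ← hlog 5 (by norm_num)]; linarith
  have hd' : (1 : ℝ) ≤ d := by exact_mod_cast hd
  have h10 : (0 : ℝ) < 10 ^ (m + k) := by positivity
  rcases le_or_gt l (m + k) with hl | hl
  · have : (10 : ℝ) ^ l ≤ 10 ^ (m + k) := zpow_le_zpow_right₀ (by norm_num) hl
    have : y < 2 * 10 ^ m * x := calc
      y < (d + 1) * 10 ^ l := hyl'
      _ ≤ 2 * d * 10 ^ (m + k) := by gcongr; linarith
      _ = 2 * 10 ^ m * (d * 10 ^ k) := by rw [zpow_add₀ (by norm_num)]; ring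
      _ ≤ 2 * 10 ^ m * x := by gcongr
    linarith
  · have : (10 : ℝ) ^ (m + k + 1) ≤ 10 ^ l := zpow_le_zpow_right₀ (by norm_num) hl
    have : 5 * 10 ^ m * x < y := calc
      5 * 10 ^ m * x < 5 * 10 ^ m * ((d + 1) * 10 ^ k) := by gcongr
      _ = 5 * (d + 1) * 10 ^ (m + k) := by rw [zpow_add₀ (by norm_num)]; ring
      _ ≤ d * 10 ^ (m + k + 1) := by rw [zpow_add_one₀ (by norm_num)]; nlinarith
      _ ≤ d * 10 ^ l := by gcongr
      _ ≤ y := hyl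
    linarith

lemma benfordP_pos {d : ℕ} (hd : 1 ≤ d) : 0 < benfordP d :=
  Real.logb_pos (by norm_num) (lt_add_of_pos_right 1 (by positivity))

lemma sub_le_mul_of_forall_succ_sub_le {g : ℕ → ℝ} {c : ℝ} {s : ℕ}
    (h : ∀ k, s ≤ k → g (k + 1) - g k ≤ c) {n : ℕ} (hn : s ≤ n) :
    g n - g s ≤ ((n : ℝ) - s) * c := by
  induction n, hn using Nat.le_induction with
  | base => simp
  | succ n hn ih => push_cast; linarith [h n hn]

lemma exists_forall_lt_of_tendsto_atTop {g : ℕ → ℝ} (hg : Tendsto g atTop atTop) {M : ℕ}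
    {B : ℝ} (hB : g M ≤ B) : ∃ s, M ≤ s ∧ g s ≤ B ∧ ∀ n, s < n → B < g n := by
  obtain ⟨N, hN⟩ := eventually_atTop.1 (hg.eventually_gt_atTop B)
  refine ⟨Nat.findGreatest (fun n => g n ≤ B) (max N M),
    Nat.le_findGreatest (le_max_right _ _) hB,
    Nat.findGreatest_spec (P := fun n => g n ≤ B) (le_max_right _ _) hB, fun n hn => ?_⟩
  rcases le_or_gt n (max N M) with h | h
  · exact lt_of_not_ge (Nat.findGreatest_is_greatest hn h)
  · exact hN n (max_lt_iff.1 h).1.le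

lemma exists_forall_mem_Ioo_of_tendsto_atTop {g : ℕ → ℝ} {C δ : ℝ} {R M : ℕ}
    (hg : Tendsto g atTop atTop) (hstep : ∀ n, 1 ≤ n → g (n + 1) - g n ≤ C / n)
    (hC : 0 ≤ C) (hR : C < δ * R) (hM : 1 ≤ M) {B : ℝ} (hB : g M ≤ B) :
    ∃ s, M ≤ s ∧ ∀ n, s < n → n ≤ s + s / R → B < g n ∧ g n < B + δ := by
  obtain ⟨s, hMs, hs, hlast⟩ := exists_forall_lt_of_tendsto_atTop hg hB
  refine ⟨s, hMs, fun n hsn hn => ⟨hlast n hsn, ?_⟩⟩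
  have hs0 : (0 : ℝ) < s := by exact_mod_cast hM.trans hMs
  have hinc : g n - g s ≤ ((n : ℝ) - s) * (C / s) :=
    sub_le_mul_of_forall_succ_sub_le (fun k hk => (hstep k (by omega)).trans
      (div_le_div_of_nonneg_left hC hs0 (by exact_mod_cast hk))) (by omega)
  have hK : ((n : ℝ) - s) * R ≤ s := by
    have : (n - s) * R ≤ s := (Nat.mul_le_mul_right R (by omega)).trans (Nat.div_mul_le_self s R)
    rw [← Nat.cast_sub hsn.le]
    exact_mod_cast this
  have hns : (1 : ℝ) ≤ n - s := by
    have : (s : ℝ) + 1 ≤ n := by exact_mod_cast hsn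
    linarith
  have : ((n : ℝ) - s) * (C / s) < δ := by
    rw [mul_div_assoc', div_lt_iff₀ hs0]
    nlinarith
  linarith

namespace Nat

lemma nth_sub_nth_pred_ne_one {p : ℕ → Prop} [DecidablePred p] {u v i : ℕ}
    (hp : ∀ n, u ≤ n → n < v → p n → ¬ p (n + 1)) (hu : count p u < i) (hv : i ≤ count p v) :
    nth p i - nth p (i - 1) ≠ 1 := by
  obtain ⟨k, rfl⟩ : ∃ k, i = k + 1 := ⟨i - 1, by omega⟩
  intro h
  rw [Nat.add_sub_cancel] at h
  have hnext : nth p (k + 1) = nth p k + 1 := by omega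
  have hmem_next : p (nth p (k + 1)) := nth_mem_of_ne_zero (by omega)
  have hmem : p (nth p k) := nth_mem_anti k.le_succ hmem_next
  have hcount : count p (nth p k) = k :=
    count_nth fun hf =>
      k.lt_succ_self.trans (lt_card_toFinset_of_nth_ne_zero (n := k + 1) (by omega) hf)
  have hu' : u ≤ nth p k := by
    by_contra! hlt
    have := count_monotone p (Nat.succ_le_of_lt hlt)
    rw [count_succ_eq_succ_count hmem, hcount] at this
    omega
  exact hp _ hu' (nth_lt_of_lt_count hv) hmem (hnext ▸ hmem_next)

lemma exists_le_card_mul_count {ι : Type*} {t : Finset ι} (ht : t.Nonempty) {q : ι → ℕ → Prop}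
    [∀ d, DecidablePred (q d)] {K : ℕ} (h : ∀ n < K, ∃ d ∈ t, q d n) :
    ∃ d ∈ t, K ≤ t.card * count (q d) K := by
  have hsum : K ≤ ∑ d ∈ t, count (q d) K := by
    induction K with
    | zero => exact Nat.zero_le _
    | succ K ih =>
      obtain ⟨d, hd, hqd⟩ := h K K.lt_succ_self
      have hone : 1 ≤ ∑ e ∈ t, if q e K then 1 else 0 :=
        (if_pos hqd).symm.le.trans (Finset.single_le_sum (f := fun e => if q e K then 1 else 0)
          (fun _ _ => Nat.zero_le _) hd)
      simp only [count_succ, Finset.sum_add_distrib]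
      linarith [ih fun n hn => h n (by omega)]
  refine Finset.exists_le_of_sum_le ht ?_
  rw [Finset.sum_const, smul_eq_mul, ← Finset.mul_sum]
  exact Nat.mul_le_mul_left _ hsum

end Nat

lemma Monotone.eventually_lt_of_tendsto_div {f : ℕ → ℕ} (hf : Monotone f) {L : ℝ} (hL : 0 < L)
    (h : Tendsto (fun N => (f N : ℝ) / N) atTop (nhds L)) (m : ℕ) :
    ∀ᶠ B in atTop, ∀ A ≤ B, B ≤ m * (B - A) → f A < f B := by
  set ε := L / (4 * (m + 1))
  have hε : 0 < ε := by positivity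
  obtain ⟨N₀, hN₀⟩ := eventually_atTop.1
    ((h.eventually (Ioo_mem_nhds (sub_lt_self L hε) (lt_add_of_pos_right L hε))).and
      (eventually_gt_atTop 0))
  have hbounds : ∀ N, N₀ ≤ N → (L - ε) * N < f N ∧ (f N : ℝ) < (L + ε) * N := by
    intro N hN
    obtain ⟨⟨hlo, hhi⟩, hN0⟩ := hN₀ N hN
    have hN0' : (0 : ℝ) < N := by exact_mod_cast hN0
    exact ⟨(lt_div_iff₀ hN0').1 hlo, (div_lt_iff₀ hN0').1 hhi⟩
  filter_upwards [eventually_ge_atTop N₀, eventually_gt_atTop (2 * m * N₀)] with B hB hB' A hAB hm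
  by_contra! hle
  have hfB := (hbounds B hB).1
  have hfA : (f A : ℝ) < (L + ε) * (A + N₀) := by
    have := (hbounds (A + N₀) (by omega)).2
    push_cast at this
    exact lt_of_le_of_lt (by exact_mod_cast hf (Nat.le_add_right A N₀)) this
  have hm' : (B : ℝ) ≤ m * (B - A) := by
    rw [← Nat.cast_sub hAB]; exact_mod_cast hm
  have hB'' : (2 * m * N₀ : ℝ) < B := by exact_mod_cast hB'
  have hle' : (f B : ℝ) ≤ f A := by exact_mod_cast hle
  -- with `L = 4 (m + 1) ε`, the bounds on `f A` and `f B` combine to `B ≤ 2 m N₀`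
  have hL' : L = 4 * (m + 1) * ε := by simp only [ε]; field_simp
  clear_value ε
  subst hL'
  nlinarith

lemma eventually_exists_mem_Ioc_of_tendsto_card_div {P : ℕ → Prop} {L : ℝ} (hL : 0 < L)
    (h : Tendsto (fun N : ℕ => (Nat.card {i | 1 ≤ i ∧ i ≤ N ∧ P i} : ℝ) / N) atTop (nhds L))
    (m : ℕ) : ∀ᶠ B in atTop, ∀ A ≤ B, B ≤ m * (B - A) → ∃ i, A < i ∧ i ≤ B ∧ P i := by
  have hmono : Monotone fun N => Nat.card {i | 1 ≤ i ∧ i ≤ N ∧ P i} := fun A B hAB =>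
    Nat.card_mono ((Set.finite_le_nat B).subset fun i hi => hi.2.1)
      fun i hi => ⟨hi.1, hi.2.1.trans hAB, hi.2.2⟩
  filter_upwards [hmono.eventually_lt_of_tendsto_div hL h m] with B hB A hAB hm
  by_contra! hnone
  refine (hB A hAB hm).not_ge (Nat.card_mono ((Set.finite_le_nat A).subset fun i hi => hi.2.1) ?_)
  exact fun i ⟨hi1, hiB, hPi⟩ => ⟨hi1, not_lt.1 fun hAi => hnone i hAi hiB hPi, hPi⟩

lemma exists_waitingTime_ne_one_of_forall_not_hasLeadingDigit_succ (a : ℕ → ℝ)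
    (hpos : ∀ n, 1 ≤ n → 0 < a n) {u K : ℕ} (hu : 1 ≤ u)
    (hwin : ∀ n, u ≤ n → n < u + K → ∀ d, 1 ≤ d →
      HasLeadingDigit (a n) d → ¬ HasLeadingDigit (a (n + 1)) d) :
    ∃ d ∈ Finset.Icc 1 9, ∃ A c, K ≤ 9 * c ∧ A + c ≤ u + K ∧
      ∀ i, A < i → i ≤ A + c → waitingTime a d i ≠ 1 := by
  classical
  set p : ℕ → ℕ → Prop := fun d n => 1 ≤ n ∧ HasLeadingDigit (a n) d
  obtain ⟨d, hd, hK⟩ := Nat.exists_le_card_mul_count (q := fun d k => p d (u + k))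
    ⟨1, by simp⟩ fun k _ => (exists_hasLeadingDigit (hpos (u + k) (by omega))).imp
      fun d ⟨hd, hlead⟩ => ⟨hd, by omega, hlead⟩
  have hcount := Nat.count_add (p := p d) u K
  refine ⟨d, hd, Nat.count (p d) u, _, by simpa using hK, hcount ▸ Nat.count_le _, ?_⟩
  intro i hAi hic
  refine Nat.nth_sub_nth_pred_ne_one (u := u) (v := u + K) ?_ hAi (hcount ▸ hic)
  exact fun n hun hnv hn hn' => hwin n hun hnv d (Finset.mem_Icc.1 hd).1 hn.2 hn'.2

lemma exists_forall_not_hasLeadingDigit_succ {a : ℕ → ℝ} {C : ℝ} {R M : ℕ}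
    (hgrow : Tendsto (fun n : ℕ => Real.log (a (n + 1)) - Real.log (a n)) atTop atTop)
    (hstep : ∀ n : ℕ, 1 ≤ n → (Real.log (a (n + 2)) - Real.log (a (n + 1))) -
      (Real.log (a (n + 1)) - Real.log (a n)) ≤ C / n)
    (hC : 0 ≤ C) (hR : C < (Real.log 5 - Real.log 2) * R) (hM : 1 ≤ M) :
    ∃ s, M ≤ s ∧ ∀ n, s < n → n ≤ s + s / R → ∀ d, 1 ≤ d →
      HasLeadingDigit (a n) d → ¬ HasLeadingDigit (a (n + 1)) d := by
  set g : ℕ → ℝ := fun n => Real.log (a (n + 1)) - Real.log (a n)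
  obtain ⟨m, hm⟩ := exists_int_ge ((g M - Real.log 2) / Real.log 10)
  rw [div_le_iff₀ (Real.log_pos (by norm_num))] at hm
  obtain ⟨s, hMs, hwin⟩ := exists_forall_mem_Ioo_of_tendsto_atTop hgrow hstep hC hR hM
    (show g M ≤ Real.log 2 + m * Real.log 10 by linarith)
  refine ⟨s, hMs, fun n hsn hn d hd hx hy => ?_⟩
  obtain ⟨hlo, hhi⟩ := hwin n hsn hn
  exact hx.log_sub_notMem_Ioo hd hy m ⟨hlo, by linarith⟩

/-- If `Δ log a_n → ∞` and `Δ log a_{n+1} = Δ log a_n + O(1/n)`, then `{a_n}` does not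
have Benford distributed waiting times. -/
theorem not_benfordWaitingTimes_of_smooth (a : ℕ → ℝ)
    (hpos : ∀ n : ℕ, 1 ≤ n → 0 < a n)
    (hgrow : Tendsto (fun n : ℕ => Real.log (a (n + 1)) - Real.log (a n)) atTop atTop)
    (hreg : ∃ C : ℝ, 0 < C ∧ ∀ n : ℕ, 1 ≤ n →
      |(Real.log (a (n + 2)) - Real.log (a (n + 1))) -
        (Real.log (a (n + 1)) - Real.log (a n))| ≤ C / n) :
    ¬ BenfordWaitingTimes a := by
  intro hB
  obtain ⟨C, hC, hreg⟩ := hreg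
  obtain ⟨R, hR⟩ := exists_nat_gt (C / (Real.log 5 - Real.log 2))
  rw [div_lt_iff₀ (sub_pos.2 (Real.log_lt_log two_pos (by norm_num))), mul_comm] at hR
  have hR0 : 0 < R := Nat.pos_of_ne_zero (by rintro rfl; simp at hR; linarith)
  obtain ⟨N₀, hN₀⟩ := eventually_atTop.1 <| (Finset.eventually_all _).2 fun d hd =>
    eventually_exists_mem_Ioc_of_tendsto_card_div
      (by simpa using benfordP_pos (Finset.mem_Icc.1 hd).1)
      (hB d (Finset.mem_Icc.1 hd).1 (Finset.mem_Icc.1 hd).2 1 le_rfl) (9 * (2 * R + 1))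
  obtain ⟨s, hMs, hwin⟩ := exists_forall_not_hasLeadingDigit_succ (M := R * (9 * N₀ + 1) + 1)
    hgrow (fun n hn => (abs_le.1 (hreg n hn)).2) hC.le hR (by omega)
  obtain ⟨d, hd, A, c, hKc, hcs, hgap⟩ :=
    exists_waitingTime_ne_one_of_forall_not_hasLeadingDigit_succ a hpos (u := s + 1)
      (K := s / R) (by omega) fun n hn hn' => hwin n hn (by omega)
  have hK : 9 * N₀ + 1 ≤ s / R := (Nat.le_div_iff_mul_le hR0).2 (by linarith)
  have hs := Nat.lt_mul_div_succ s hR0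
  -- `A + c ≤ s + 1 + s / R ≤ (2 R + 1) (s / R) ≤ 9 (2 R + 1) c`
  obtain ⟨i, hAi, hic, hi⟩ := hN₀ (A + c) (by omega) d hd A (by omega) (by
    rw [Nat.add_sub_cancel_left]
    nlinarith)
  exact hgap i hAi hic hi
end

section
/- The sequence {n^n} is not locally Benford distributed of order 2 and does not have Benford distributed waiting times. -/
open Filter

/-!
Write `φ(n) = log₁₀ (n ^ n) = n log₁₀ n`; then `n ^ n` has leading digit 1 iff
`{φ(n)} < log₁₀ 2`. On the window `1000·10^m ≤ n ≤ 1050·10^m` the increment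
`φ(n+1) - φ(n) ≈ log₁₀ e + log₁₀ n` equals `(m + 3) + s` with `s ∈ [(1 - log₁₀ 2)/2, 7/15]`.
Since `s > log₁₀ 2`, the fractional part cannot stay below `log₁₀ 2` for two consecutive
indices, so no pair of consecutive terms in the window starts with 1: the number of such
pairs, and the number of waiting times equal to 1, does not grow across the window,
which is incompatible with a positive limiting density. For the waiting times one also needs
many occurrences of the digit 1 inside the window: two steps lower the fractional part by
between `1/15` and `log₁₀ 2`, so it cannot jump over `[0, log₁₀ 2)` and lands there
at least once among any 31 consecutive indices.
-/

open Real

theorem Int.fract_eq_fract_add {α : Type*} [Ring α] [LinearOrder α] [IsStrictOrderedRing α]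
    [FloorRing α] {a b c : α} {k : ℤ} (h : b = a + k + c) (h0 : 0 ≤ Int.fract a + c)
    (h1 : Int.fract a + c < 1) : Int.fract b = Int.fract a + c := by
  refine Int.fract_eq_iff.2 ⟨h0, h1, ⌊a⌋ + k, ?_⟩
  rw [h, ← Int.self_sub_floor]
  push_cast
  abel

theorem exists_lt_of_forall_le_sub {α : Type*} [Field α] [LinearOrder α] [IsStrictOrderedRing α]
    {w : ℕ → α} {c β : α} {t : ℕ} (h0 : w 0 < 1)
    (hnonneg : 0 ≤ w t) (hstep : ∀ i < t, c ≤ w i → w (i + 1) ≤ w i - β) (ht : 1 ≤ t * β) :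
    ∃ i ≤ t, w i < c := by
  by_contra! hge
  have hdecay : ∀ i ≤ t, w i ≤ w 0 - i * β := by
    intro i
    induction i with
    | zero => simp
    | succ i ih =>
      intro hi
      have := hstep i (by omega) (hge i (by omega))
      have := ih (by omega)
      push_cast
      linarith
  linarith [hdecay t le_rfl]

theorem Nat.count_add_le_count_add_mul {p : ℕ → Prop} [DecidablePred p] {a w s : ℕ}
    (h : ∀ j < s, ∃ x, a + w * j ≤ x ∧ x < a + w * (j + 1) ∧ p x) :
    Nat.count p a + s ≤ Nat.count p (a + w * s) := by
  induction s with
  | zero => simp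
  | succ s ih =>
    obtain ⟨x, hx_lo, hx_hi, hpx⟩ := h s (Nat.lt_succ_self s)
    have := ih fun j hj => h j (by omega)
    have := Nat.count_monotone p hx_lo
    have := Nat.count_strict_mono hpx hx_hi
    omega

theorem Nat.card_le_card_of_forall_not {P : ℕ → Prop} {a b : ℕ}
    (h : ∀ n, a < n → n ≤ b → ¬ P n) :
    Nat.card {n : ℕ | 1 ≤ n ∧ n ≤ b ∧ P n} ≤ Nat.card {n : ℕ | 1 ≤ n ∧ n ≤ a ∧ P n} :=
  Nat.card_mono ((Set.finite_Iic a).subset fun _ hn => hn.2.1)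
    fun n ⟨h1, h2, h3⟩ => ⟨h1, not_lt.1 fun h' => h n h' h2 h3, h3⟩

theorem not_tendsto_div_of_gaps {J a b : ℕ → ℕ} {L ε : ℝ} (hL : 0 < L) (hε : 0 < ε)
    (ha : Tendsto a atTop atTop) (hab : ∀ m, (1 + ε) * a m ≤ b m)
    (hJ : ∀ m, J (b m) ≤ J (a m)) :
    ¬ Tendsto (fun N : ℕ => (J N : ℝ) / N) atTop (nhds L) := by
  intro h
  have hb : Tendsto b atTop atTop := by
    refine tendsto_atTop_mono (fun m => ?_) ha
    have := hab m
    have : (a m : ℝ) ≤ b m := by nlinarith [(a m).cast_nonneg (α := ℝ)]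
    exact_mod_cast this
  have hle : ∀ᶠ m in atTop, (J (b m) : ℝ) / b m ≤ (J (a m) : ℝ) / a m / (1 + ε) := by
    filter_upwards [ha.eventually_gt_atTop 0] with m hm
    rw [div_div, mul_comm]
    gcongr
    · exact_mod_cast hJ m
    · exact hab m
  have := le_of_tendsto_of_tendsto (h.comp hb) ((h.comp ha).div_const (1 + ε)) hle
  rw [le_div_iff₀ (by positivity)] at this
  nlinarith

noncomputable def log10PowSelf (x : ℝ) : ℝ := x * logb 10 x

theorem logb_ten_mul_zpow {c : ℝ} (hc : 0 < c) (k : ℤ) : logb 10 (c * 10 ^ k) = logb 10 c + k := by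
  rw [logb_mul hc.ne' (by positivity), logb, logb, log_zpow]
  field_simp

theorem hasLeadingDigit_iff_exists_logb {x : ℝ} (hx : 0 < x) {d : ℕ} (hd : 1 ≤ d) :
    HasLeadingDigit x d ↔
      ∃ k : ℤ, logb 10 d + k ≤ logb 10 x ∧ logb 10 x < logb 10 (d + 1) + k := by
  have hd0 : (0 : ℝ) < d := by exact_mod_cast hd
  refine exists_congr fun k => and_congr ?_ ?_
  · rw [← logb_ten_mul_zpow hd0, logb_le_logb (by norm_num) (by positivity) hx]
  · rw [← logb_ten_mul_zpow (by positivity), logb_lt_logb_iff (by norm_num) hx (by positivity)]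

theorem hasLeadingDigit_iff_fract_logb {x : ℝ} (hx : 0 < x) {d : ℕ} (hd : 1 ≤ d) (hd9 : d ≤ 9) :
    HasLeadingDigit x d ↔
      logb 10 d ≤ Int.fract (logb 10 x) ∧ Int.fract (logb 10 x) < logb 10 (d + 1) := by
  have hlo : 0 ≤ logb 10 d := logb_nonneg (by norm_num) (by exact_mod_cast hd)
  have hhi : logb 10 (d + 1) ≤ 1 := by
    have : (d : ℝ) ≤ 9 := by exact_mod_cast hd9
    calc logb 10 (d + 1) ≤ logb 10 10 :=
          logb_le_logb_of_le (by norm_num) (by positivity) (by linarith)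
      _ = 1 := logb_self_eq_one (by norm_num)
  rw [hasLeadingDigit_iff_exists_logb hx hd]
  constructor
  · rintro ⟨k, h1, h2⟩
    have hk : ⌊logb 10 x⌋ = k := Int.floor_eq_iff.2 ⟨by linarith, by linarith⟩
    rw [← Int.self_sub_floor, hk]
    constructor <;> linarith
  · rintro ⟨h1, h2⟩
    refine ⟨⌊logb 10 x⌋, ?_, ?_⟩ <;> linarith [Int.floor_add_fract (logb 10 x)]

theorem hasLeadingDigit_one_pow_self_iff {n : ℕ} (hn : 1 ≤ n) :
    HasLeadingDigit ((n : ℝ) ^ n) 1 ↔ Int.fract (log10PowSelf n) < logb 10 2 := by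
  have hn0 : (0 : ℝ) < n := by exact_mod_cast hn
  rw [hasLeadingDigit_iff_fract_logb (by positivity) le_rfl (by norm_num), logb_pow, log10PowSelf]
  norm_num [Int.fract_nonneg]

theorem logb_ten_two_lt_one_third : logb 10 2 < 1 / 3 := by
  rw [logb, div_lt_iff₀ (log_pos (by norm_num))]
  have h8 : log 8 = 3 * log 2 := by
    rw [show (8 : ℝ) = 2 ^ 3 by norm_num, log_pow]; norm_num
  linarith [log_lt_log (by norm_num : (0 : ℝ) < 8) (by norm_num : (8 : ℝ) < 10)]

theorem nine_fourths_lt_log_ten : 9 / 4 < log 10 := by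
  have h : exp 9 < 10 ^ 4 := by
    calc exp 9 = exp 1 ^ 9 := by rw [← exp_nat_mul]; norm_num
      _ < 2.7182818286 ^ 9 := by gcongr; exact exp_one_lt_d9
      _ < 10 ^ 4 := by norm_num
  have := (lt_log_iff_exp_lt (by norm_num)).2 h
  rw [log_pow] at this
  push_cast at this
  linarith

theorem log_ten_lt_five_halves : log 10 < 5 / 2 := by
  have h : 10 ^ 2 < exp 5 := by
    calc (10 : ℝ) ^ 2 < 2.7182818283 ^ 5 := by norm_num
      _ < exp 1 ^ 5 := by gcongr; exact exp_one_gt_d9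
      _ = exp 5 := by rw [← exp_nat_mul]; norm_num
  have := (log_lt_iff_lt_exp (by norm_num)).2 h
  rw [log_pow] at this
  push_cast at this
  linarith

theorem log10PowSelf_add_one_sub {x : ℝ} (hx : 0 < x) (K : ℕ) :
    log10PowSelf (x + 1) - log10PowSelf x - K =
      (x * log ((x + 1) / x) + log ((x + 1) / 10 ^ K)) / log 10 := by
  have hL : log 10 ≠ 0 := (log_pos (by norm_num)).ne'
  rw [log10PowSelf, log10PowSelf, logb, logb, log_div (by positivity) hx.ne',
    log_div (by positivity) (by positivity), log_pow]
  field_simp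
  ring

theorem log10PowSelf_add_one_sub_mem_Icc {x : ℝ} {K : ℕ} (hx : 99 ≤ x) (hlo : 10 ^ K ≤ x + 1)
    (hhi : x + 1 ≤ 21 / 20 * 10 ^ K) :
    log10PowSelf (x + 1) - log10PowSelf x - K ∈ Set.Icc ((1 - logb 10 2) / 2) (7 / 15) := by
  have hx0 : 0 < x := by linarith
  have hP : (0 : ℝ) < 10 ^ K := by positivity
  have hu_le : x * log ((x + 1) / x) ≤ 1 := by
    have := log_le_sub_one_of_pos (show 0 < (x + 1) / x by positivity)
    rw [show (x + 1) / x - 1 = 1 / x by field_simp; ring] at this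
    calc x * log ((x + 1) / x) ≤ x * (1 / x) := by gcongr
      _ = 1 := by field_simp
  have hu_ge : 99 / 100 ≤ x * log ((x + 1) / x) := by
    have := one_sub_inv_le_log_of_pos (show 0 < (x + 1) / x by positivity)
    rw [inv_div, show 1 - x / (x + 1) = 1 / (x + 1) by field_simp; ring] at this
    calc (99 : ℝ) / 100 ≤ x * (1 / (x + 1)) := by
          rw [mul_one_div, le_div_iff₀ (by linarith)]; linarith
      _ ≤ x * log ((x + 1) / x) := by gcongr
  have hv_ge : 0 ≤ log ((x + 1) / 10 ^ K) := log_nonneg ((one_le_div hP).2 hlo)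
  have hv_le : log ((x + 1) / 10 ^ K) ≤ 1 / 20 := by
    have := log_le_sub_one_of_pos (show 0 < (x + 1) / 10 ^ K by positivity)
    have : (x + 1) / 10 ^ K ≤ 21 / 20 := (div_le_iff₀ hP).2 hhi
    linarith
  have hL := nine_fourths_lt_log_ten
  have hL' := log_ten_lt_five_halves
  have hlog2 := log_two_gt_d9
  rw [log10PowSelf_add_one_sub hx0, logb]
  constructor
  · rw [le_div_iff₀ (by linarith)]
    have : (1 - log 2 / log 10) / 2 * log 10 = (log 10 - log 2) / 2 := by field_simp
    linarith
  · rw [div_le_iff₀ (by linarith)]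
    linarith

theorem exists_log10PowSelf_succ_eq {m n : ℕ} (h1 : 1000 * 10 ^ m ≤ n)
    (h2 : n + 1 ≤ 1050 * 10 ^ m) :
    ∃ s : ℝ, log10PowSelf (n + 1 : ℕ) = log10PowSelf n + (m + 3 : ℕ) + s ∧
      (1 - logb 10 2) / 2 ≤ s ∧ s ≤ 7 / 15 := by
  have hpow : (10 : ℝ) ^ (m + 3) = 1000 * 10 ^ m := by ring
  have h1' : (1000 : ℝ) * 10 ^ m ≤ n := by exact_mod_cast h1
  have h2' : (n : ℝ) + 1 ≤ 1050 * 10 ^ m := by exact_mod_cast h2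
  have h10 : (1 : ℝ) ≤ 10 ^ m := one_le_pow₀ (by norm_num)
  obtain ⟨hlo, hhi⟩ := log10PowSelf_add_one_sub_mem_Icc (x := n) (K := m + 3) (by linarith)
    (by rw [hpow]; linarith) (by rw [hpow]; linarith)
  exact ⟨_, by push_cast; ring, hlo, hhi⟩

theorem lt_fract_log10PowSelf_succ_of_fract_lt {m n : ℕ} (h1 : 1000 * 10 ^ m ≤ n)
    (h2 : n + 1 ≤ 1050 * 10 ^ m) (hn : Int.fract (log10PowSelf n) < logb 10 2) :
    logb 10 2 < Int.fract (log10PowSelf (n + 1 : ℕ)) := by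
  obtain ⟨s, hs, hs_lo, hs_hi⟩ := exists_log10PowSelf_succ_eq h1 h2
  have hc := logb_ten_two_lt_one_third
  have h0 := Int.fract_nonneg (log10PowSelf n)
  rw [Int.fract_eq_fract_add (k := (m + 3 : ℕ)) (c := s) (by rw [hs]; push_cast; ring) (by linarith)
    (by linarith)]
  linarith

theorem fract_log10PowSelf_add_two_le {m n : ℕ} (h1 : 1000 * 10 ^ m ≤ n)
    (h2 : n + 2 ≤ 1050 * 10 ^ m) (hn : logb 10 2 ≤ Int.fract (log10PowSelf n)) :
    Int.fract (log10PowSelf (n + 2 : ℕ)) ≤ Int.fract (log10PowSelf n) - 1 / 15 := by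
  obtain ⟨s, hs, hs_lo, hs_hi⟩ := exists_log10PowSelf_succ_eq h1 (by omega)
  obtain ⟨s', hs', hs'_lo, hs'_hi⟩ := exists_log10PowSelf_succ_eq (n := n + 1) (by omega) h2
  have hlt := Int.fract_lt_one (log10PowSelf n)
  rw [Int.fract_eq_fract_add (k := (2 * m + 7 : ℕ)) (c := s + s' - 1)
    (by rw [hs', hs]; push_cast; ring) (by linarith) (by linarith)]
  linarith

theorem not_hasLeadingDigit_one_pow_self_pair {m n : ℕ} (h1 : 1000 * 10 ^ m ≤ n)
    (h2 : n + 1 ≤ 1050 * 10 ^ m) :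
    ¬ (HasLeadingDigit ((n : ℝ) ^ n) 1 ∧ HasLeadingDigit (((n : ℝ) + 1) ^ (n + 1)) 1) := by
  have h10 : 1 ≤ 10 ^ m := Nat.one_le_pow _ _ (by norm_num)
  rintro ⟨hn, hn1⟩
  rw [hasLeadingDigit_one_pow_self_iff (by omega)] at hn
  rw [← Nat.cast_succ, hasLeadingDigit_one_pow_self_iff (by omega)] at hn1
  exact (lt_fract_log10PowSelf_succ_of_fract_lt h1 h2 hn).not_gt hn1

theorem exists_hasLeadingDigit_one_pow_self {m n : ℕ} (h1 : 1000 * 10 ^ m ≤ n)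
    (h2 : n + 30 ≤ 1050 * 10 ^ m) :
    ∃ j ≤ 30, HasLeadingDigit (((n + j : ℕ) : ℝ) ^ (n + j)) 1 := by
  have h10 : 1 ≤ 10 ^ m := Nat.one_le_pow _ _ (by norm_num)
  obtain ⟨i, hi, hlt⟩ := exists_lt_of_forall_le_sub
    (w := fun i => Int.fract (log10PowSelf (n + 2 * i : ℕ))) (t := 15) (β := 1 / 15)
    (Int.fract_lt_one _) (Int.fract_nonneg _)
    (fun i hi hc =>
      fract_log10PowSelf_add_two_le (m := m) (n := n + 2 * i) (by omega) (by omega) hc)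
    (by norm_num)
  exact ⟨2 * i, by omega, (hasLeadingDigit_one_pow_self_iff (by omega)).2 hlt⟩

def IsLeadingOnePowSelf (n : ℕ) : Prop := 1 ≤ n ∧ HasLeadingDigit ((n : ℝ) ^ n) 1

noncomputable instance : DecidablePred IsLeadingOnePowSelf := Classical.decPred _

theorem infinite_setOf_isLeadingOnePowSelf : {n | IsLeadingOnePowSelf n}.Infinite := by
  refine Set.infinite_of_forall_exists_gt fun a => ?_
  have ha : a < 10 ^ a := Nat.lt_pow_self (by norm_num)
  obtain ⟨j, -, hj⟩ := exists_hasLeadingDigit_one_pow_self (m := a) le_rfl (by omega)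
  exact ⟨1000 * 10 ^ a + j, ⟨by omega, hj⟩, by omega⟩

theorem count_isLeadingOnePowSelf_add_le (m : ℕ) :
    Nat.count IsLeadingOnePowSelf (1000 * 10 ^ m) + 10 ^ m ≤
      Nat.count IsLeadingOnePowSelf (1050 * 10 ^ m) := by
  have hwindows := Nat.count_add_le_count_add_mul (p := IsLeadingOnePowSelf)
    (a := 1000 * 10 ^ m) (w := 50) (s := 10 ^ m) fun j hj => by
      obtain ⟨k, hk, hd⟩ := exists_hasLeadingDigit_one_pow_self (m := m)
        (n := 1000 * 10 ^ m + 50 * j) (by omega) (by omega)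
      exact ⟨_, by omega, by omega, by omega, hd⟩
  rwa [show 1000 * 10 ^ m + 50 * 10 ^ m = 1050 * 10 ^ m by ring] at hwindows

theorem tendsto_count_isLeadingOnePowSelf :
    Tendsto (fun m => Nat.count IsLeadingOnePowSelf (1000 * 10 ^ m)) atTop atTop := by
  refine (tendsto_add_atTop_iff_nat 1).1 (tendsto_atTop_mono (fun m => ?_)
    (tendsto_pow_atTop_atTop_of_one_lt (by norm_num : 1 < 10)))
  have := count_isLeadingOnePowSelf_add_le m
  have := Nat.count_monotone IsLeadingOnePowSelf
    (show 1050 * 10 ^ m ≤ 1000 * 10 ^ (m + 1) by rw [pow_succ]; omega)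
  omega

theorem waitingTime_pow_self_ne_one {m i : ℕ}
    (h1 : Nat.count IsLeadingOnePowSelf (1000 * 10 ^ m) < i)
    (h2 : i ≤ Nat.count IsLeadingOnePowSelf (1050 * 10 ^ m)) :
    waitingTime (fun n : ℕ => (n : ℝ) ^ n) 1 i ≠ 1 := by
  have hinf := infinite_setOf_isLeadingOnePowSelf
  change Nat.nth IsLeadingOnePowSelf i - Nat.nth IsLeadingOnePowSelf (i - 1) ≠ 1
  intro hw
  set n := Nat.nth IsLeadingOnePowSelf (i - 1)
  have hlo : 1000 * 10 ^ m ≤ n :=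
    (Nat.count_le_iff_le_nth (p := IsLeadingOnePowSelf) hinf).1 (by omega)
  have hhi : n < 1050 * 10 ^ m := Nat.nth_lt_of_lt_count (by omega)
  have hsucc : Nat.nth IsLeadingOnePowSelf i = n + 1 := by
    have := Nat.nth_strictMono hinf (show i - 1 < i by omega)
    omega
  have hn := Nat.nth_mem_of_infinite hinf (i - 1)
  have hn1 := Nat.nth_mem_of_infinite hinf i
  rw [hsucc] at hn1
  exact not_hasLeadingDigit_one_pow_self_pair hlo hhi ⟨hn.2, by exact_mod_cast hn1.2⟩

theorem pow_self_not_locallyBenfordDistributed_two :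
    ¬ LocallyBenfordDistributed (fun n : ℕ => (n : ℝ) ^ n) 2 := by
  intro hL
  have hpair : Tendsto (fun N : ℕ => (Nat.card {n : ℕ | 1 ≤ n ∧ n ≤ N ∧
      HasLeadingDigit ((n : ℝ) ^ n) 1 ∧ HasLeadingDigit (((n : ℝ) + 1) ^ (n + 1)) 1} : ℝ) / N)
      atTop (nhds (logb 10 2 * logb 10 2)) := by
    simpa [Fin.forall_fin_two, Fin.prod_univ_two, benfordP, one_add_one_eq_two]
      using hL ![1, 1] (by simp [Fin.forall_fin_two])
  have hc : 0 < logb 10 2 := logb_pos (by norm_num) (by norm_num)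
  refine not_tendsto_div_of_gaps (mul_pos hc hc) (by norm_num : (0 : ℝ) < 1 / 25)
    (a := fun m => 1000 * 10 ^ m) (b := fun m => 1040 * 10 ^ m) ?_ (fun m => ?_)
    (fun m => Nat.card_le_card_of_forall_not fun n h1 h2 hn => ?_) hpair
  · exact tendsto_atTop_mono (fun m => Nat.le_mul_of_pos_left _ (by norm_num))
      (tendsto_pow_atTop_atTop_of_one_lt (by norm_num : 1 < 10))
  · push_cast; linarith
  · exact not_hasLeadingDigit_one_pow_self_pair (m := m) h1.le (by omega) hn

theorem pow_self_not_benfordWaitingTimes :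
    ¬ BenfordWaitingTimes (fun n : ℕ => (n : ℝ) ^ n) := by
  intro hW
  have hone : Tendsto (fun N : ℕ => (Nat.card {i : ℕ | 1 ≤ i ∧ i ≤ N ∧
      waitingTime (fun n : ℕ => (n : ℝ) ^ n) 1 i = 1} : ℝ) / N) atTop (nhds (logb 10 2)) := by
    simpa [benfordP, one_add_one_eq_two] using hW 1 le_rfl (by norm_num) 1 le_rfl
  refine not_tendsto_div_of_gaps (logb_pos (by norm_num) (by norm_num))
    (by norm_num : (0 : ℝ) < 1 / 1000) tendsto_count_isLeadingOnePowSelf (fun m => ?_)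
    (fun m => Nat.card_le_card_of_forall_not fun i h1 h2 => waitingTime_pow_self_ne_one h1 h2) hone
  have hgap : (Nat.count IsLeadingOnePowSelf (1000 * 10 ^ m) : ℝ) + 10 ^ m ≤
      Nat.count IsLeadingOnePowSelf (1050 * 10 ^ m) := by
    exact_mod_cast count_isLeadingOnePowSelf_add_le m
  have hle : (Nat.count IsLeadingOnePowSelf (1000 * 10 ^ m) : ℝ) ≤ 1000 * 10 ^ m := by
    exact_mod_cast Nat.count_le _
  linarith

/-- The sequence `{n^n}` is not locally Benford distributed of order 2 and does not
have Benford distributed waiting times. -/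
theorem pow_self_not_locallyBenford :
    ¬ LocallyBenfordDistributed (fun n : ℕ => (n : ℝ) ^ n) 2 ∧
      ¬ BenfordWaitingTimes (fun n : ℕ => (n : ℝ) ^ n) :=
  ⟨pow_self_not_locallyBenfordDistributed_two, pow_self_not_benfordWaitingTimes⟩
end
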